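/- arXiv:math/0303247 — 4 statements merged into one kernel-verified Lean document; each statement's English description precedes it below -/
import Mathlib

section
/- The function g(z) = log(cosh(Re(z)/2)) − log(cos(Im(z)/2)) is convex on the strip {z ∈ ℂ : |Im(z)| < π} (viewed as a convex subset of ℝ²), and it is strictly convex in the Im-direction; consequently, for every s ∈ (0,1) the sublevel set {z ∈ 𝒞 : f(z) ≤ s} is convex. -/
noncomputable def f (z : ℂ) : ℝ := 1 - Real.cos (z.im / 2) / Real.cosh (z.re / 2)

noncomputable def g (z : ℂ) : ℝ :=
  Real.log (Real.cosh (z.re / 2)) - Real.log (Real.cos (z.im / 2))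

open Real Set

lemma cos_half_pos {x : ℝ} (hx : x ∈ Ioo (-π) π) : 0 < Real.cos (x / 2) := by
  apply Real.cos_pos_of_mem_Ioo
  constructor <;> [linarith [hx.1]; linarith [hx.2]]

lemma hasDerivAt_h1 (x : ℝ) :
    HasDerivAt (fun x : ℝ => Real.log (Real.cosh (x / 2)))
      (Real.sinh (x / 2) / (2 * Real.cosh (x / 2))) x := by
  have hu : HasDerivAt (fun x : ℝ => x / 2) (1 / 2 : ℝ) x := by
    simpa using (hasDerivAt_id x).div_const 2
  have hc : HasDerivAt (fun x : ℝ => Real.cosh (x / 2)) (Real.sinh (x / 2) * (1 / 2)) x :=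
    by have := (Real.hasDerivAt_cosh (x / 2)).comp x hu; exact this
  have hl := (Real.hasDerivAt_log (Real.cosh_pos (x := x / 2)).ne').comp x hc
  have hval : (Real.cosh (x / 2))⁻¹ * (Real.sinh (x / 2) * (1 / 2))
      = Real.sinh (x / 2) / (2 * Real.cosh (x / 2)) := by
    ring
  exact hval ▸ hl

lemma hasDerivAt_h1' (x : ℝ) :
    HasDerivAt (fun x : ℝ => Real.sinh (x / 2) / (2 * Real.cosh (x / 2)))
      (1 / (4 * Real.cosh (x / 2) ^ 2)) x := by
  have hu : HasDerivAt (fun x : ℝ => x / 2) (1 / 2 : ℝ) x := by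
    simpa using (hasDerivAt_id x).div_const 2
  have hs : HasDerivAt (fun x : ℝ => Real.sinh (x / 2)) (Real.cosh (x / 2) * (1 / 2)) x :=
    by have := (Real.hasDerivAt_sinh (x / 2)).comp x hu; exact this
  have hc : HasDerivAt (fun x : ℝ => 2 * Real.cosh (x / 2))
      (2 * (Real.sinh (x / 2) * (1 / 2))) x :=
    by have := ((Real.hasDerivAt_cosh (x / 2)).comp x hu).const_mul 2; exact this
  have hne : (2 : ℝ) * Real.cosh (x / 2) ≠ 0 := by positivity
  have h2 : Real.cosh (x / 2) ≠ 0 := (Real.cosh_pos (x := x / 2)).ne'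
  have := hs.div hc hne
  convert this using 1
  · rfl
  · rfl
  · rfl
  have key := Real.cosh_sq_sub_sinh_sq (x / 2)
  field_simp
  nlinarith [key]

lemma h1_convex : ConvexOn ℝ univ (fun x : ℝ => Real.log (Real.cosh (x / 2))) := by
  apply convexOn_of_hasDerivWithinAt2_nonneg convex_univ
    (f' := fun x => Real.sinh (x / 2) / (2 * Real.cosh (x / 2)))
    (f'' := fun x => 1 / (4 * Real.cosh (x / 2) ^ 2))
  · exact fun x _ => ((hasDerivAt_h1 x).continuousAt).continuousWithinAt
  · exact fun x _ => (hasDerivAt_h1 x).hasDerivWithinAt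
  · exact fun x _ => (hasDerivAt_h1' x).hasDerivWithinAt
  · intro x _; positivity

lemma hasDerivAt_h2 {x : ℝ} (hx : x ∈ Ioo (-π) π) :
    HasDerivAt (fun x : ℝ => -Real.log (Real.cos (x / 2))) (Real.tan (x / 2) / 2) x := by
  have hu : HasDerivAt (fun x : ℝ => x / 2) (1 / 2 : ℝ) x := by
    simpa using (hasDerivAt_id x).div_const 2
  have hc : HasDerivAt (fun x : ℝ => Real.cos (x / 2)) (-Real.sin (x / 2) * (1 / 2)) x :=
    by have := (Real.hasDerivAt_cos (x / 2)).comp x hu; exact this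
  have hpos := cos_half_pos hx
  have hl := ((Real.hasDerivAt_log hpos.ne').comp x hc).neg
  have hval : -((Real.cos (x / 2))⁻¹ * (-Real.sin (x / 2) * (1 / 2)))
      = Real.tan (x / 2) / 2 := by
    rw [Real.tan_eq_sin_div_cos]
    ring
  exact hval ▸ hl

lemma h2_strictConvex :
    StrictConvexOn ℝ (Ioo (-π) π) (fun x : ℝ => -Real.log (Real.cos (x / 2))) := by
  have hcont : ContinuousOn (fun x : ℝ => -Real.log (Real.cos (x / 2))) (Ioo (-π) π) :=
    fun x hx => ((hasDerivAt_h2 hx).continuousAt).continuousWithinAt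
  apply StrictMonoOn.strictConvexOn_of_deriv (convex_Ioo _ _) hcont
  rw [interior_Ioo]
  have heq : EqOn (fun x : ℝ => Real.tan (x / 2) / 2)
      (deriv fun x : ℝ => -Real.log (Real.cos (x / 2))) (Ioo (-π) π) :=
    fun x hx => ((hasDerivAt_h2 hx).deriv).symm
  apply StrictMonoOn.congr _ heq
  -- strict monotonicity of tan (x/2) / 2 on Ioo (-π) π
  apply strictMonoOn_of_deriv_pos (convex_Ioo _ _)
  · intro x hx
    have hpos := cos_half_pos hx
    have hinner : ContinuousAt (fun y : ℝ => y / 2) x := continuousAt_id.div_const 2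
    have htan : ContinuousAt (fun y : ℝ => Real.tan (y / 2)) x :=
      ContinuousAt.comp (f := fun y : ℝ => y / 2) (Real.continuousAt_tan.2 hpos.ne') hinner
    exact (htan.div_const 2).continuousWithinAt
  · rw [interior_Ioo]
    intro x hx
    have hpos := cos_half_pos hx
    have hu : HasDerivAt (fun x : ℝ => x / 2) (1 / 2 : ℝ) x := by
      simpa using (hasDerivAt_id x).div_const 2
    have ht : HasDerivAt (fun x : ℝ => Real.tan (x / 2) / 2)
        (1 / Real.cos (x / 2) ^ 2 * (1 / 2) / 2) x :=
      by have := ((Real.hasDerivAt_tan hpos.ne').comp x hu).div_const 2; exact this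
    rw [ht.deriv]
    positivity

lemma g_eq (z : ℂ) :
    g z = Real.log (Real.cosh (z.re / 2)) + -Real.log (Real.cos (z.im / 2)) := by
  simp [g, sub_eq_add_neg]

lemma strip_eq : {z : ℂ | |z.im| < Real.pi} = Complex.imLm ⁻¹' (Ioo (-π) π) := by
  ext z; simp [abs_lt, Complex.imLm]

lemma strip_convex : Convex ℝ {z : ℂ | |z.im| < Real.pi} := by
  rw [strip_eq]; exact (convex_Ioo _ _).linear_preimage _

lemma mem_strip {z : ℂ} (hz : z ∈ {z : ℂ | |z.im| < Real.pi}) : z.im ∈ Ioo (-π) π := by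
  simpa [abs_lt] using hz

lemma g_convex : ConvexOn ℝ {z : ℂ | |z.im| < Real.pi} g := by
  refine ⟨strip_convex, ?_⟩
  intro x hx y hy a b ha hb hab
  have h1 := h1_convex.2 (mem_univ x.re) (mem_univ y.re) ha hb hab
  have h2 := h2_strictConvex.convexOn.2 (mem_strip hx) (mem_strip hy) ha hb hab
  simp only [g_eq, Complex.add_re, Complex.add_im, Complex.smul_re, Complex.smul_im,
    smul_eq_mul] at *
  linarith

theorem stmt_4 :
    ConvexOn ℝ {z : ℂ | |z.im| < Real.pi} g ∧
    (∀ z ∈ {z : ℂ | |z.im| < Real.pi}, ∀ w ∈ {z : ℂ | |z.im| < Real.pi},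
      z.re = w.re → z ≠ w → ∀ a b : ℝ, 0 < a → 0 < b → a + b = 1 →
        g (a • z + b • w) < a * g z + b * g w) ∧
    (∀ s ∈ Set.Ioo (0 : ℝ) 1,
      Convex ℝ {z : ℂ | |z.im| < Real.pi ∧ f z ≤ s}) := by
  refine ⟨g_convex, ?_, ?_⟩
  · intro z hz w hw hre hne a b ha hb hab
    have him : z.im ≠ w.im := by
      intro h; exact hne (Complex.ext hre h)
    have h2 := h2_strictConvex.2 (mem_strip hz) (mem_strip hw) him ha hb hab
    simp only [smul_eq_mul] at h2
    have h1 : a * z.re + b * w.re = z.re := by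
      rw [hre, ← add_mul, hab, one_mul]
    simp only [g_eq, Complex.add_re, Complex.add_im, Complex.smul_re, Complex.smul_im,
      smul_eq_mul]
    rw [h1]
    have hrw : w.re = z.re := hre.symm
    rw [hrw]
    have hexp : a * (Real.log (Real.cosh (z.re / 2)) + -Real.log (Real.cos (z.im / 2))) +
        b * (Real.log (Real.cosh (z.re / 2)) + -Real.log (Real.cos (w.im / 2))) =
        (a + b) * Real.log (Real.cosh (z.re / 2)) +
          (a * -Real.log (Real.cos (z.im / 2)) + b * -Real.log (Real.cos (w.im / 2))) := by
      ring
    rw [hexp, hab, one_mul]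
    linarith [h2]
  · intro s hs
    have h1s : (0 : ℝ) < 1 - s := by linarith [hs.2]
    have hset : {z : ℂ | |z.im| < Real.pi ∧ f z ≤ s} =
        {z ∈ {z : ℂ | |z.im| < Real.pi} | g z ≤ -Real.log (1 - s)} := by
      ext z
      simp only [mem_setOf_eq, mem_sep_iff, and_congr_right_iff]
      intro hz
      have hcos : 0 < Real.cos (z.im / 2) := cos_half_pos (mem_strip hz)
      have hcosh : 0 < Real.cosh (z.re / 2) := Real.cosh_pos _
      constructor
      · intro h
        have h' : 1 - s ≤ Real.cos (z.im / 2) / Real.cosh (z.re / 2) := by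
          simp only [f] at h; linarith
        have h2 : (1 - s) * Real.cosh (z.re / 2) ≤ Real.cos (z.im / 2) :=
          (le_div_iff₀ hcosh).1 h'
        have h3 := Real.log_le_log (by positivity) h2
        rw [Real.log_mul h1s.ne' hcosh.ne'] at h3
        simp only [g]; linarith
      · intro h
        simp only [g] at h
        have h3 : Real.log ((1 - s) * Real.cosh (z.re / 2)) ≤ Real.log (Real.cos (z.im / 2)) := by
          rw [Real.log_mul h1s.ne' hcosh.ne']; linarith
        have h2 := (Real.log_le_log_iff (by positivity) hcos).1 h3
        have h' := (le_div_iff₀ hcosh).2 h2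
        simp only [f]; linarith
    rw [hset]
    exact g_convex.convex_le _
end

section
/- Along every ray from the origin, f is strictly increasing: if θ ∈ ℝ and 0 < r₁ < r₂ are such that both r₁e^{iθ} and r₂e^{iθ} lie in the strip |Im(z)| < π, then f(r₁e^{iθ}) < f(r₂e^{iθ}). -/
theorem stmt_5 (θ r₁ r₂ : ℝ) (h1 : 0 < r₁) (h12 : r₁ < r₂)
    (hz1 : |((r₁ : ℂ) * Complex.exp (θ * Complex.I)).im| < Real.pi)
    (hz2 : |((r₂ : ℂ) * Complex.exp (θ * Complex.I)).im| < Real.pi) :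
    f ((r₁ : ℂ) * Complex.exp (θ * Complex.I)) <
      f ((r₂ : ℂ) * Complex.exp (θ * Complex.I)) := by
  have h2 : (0:ℝ) < r₂ := h1.trans h12
  simp only [f, Complex.mul_im, Complex.mul_re, Complex.ofReal_re, Complex.ofReal_im,
    Complex.exp_ofReal_mul_I_re, Complex.exp_ofReal_mul_I_im, zero_mul, mul_zero,
    add_zero, zero_add, sub_zero] at *
  set s := Real.sin θ with hs
  set c := Real.cos θ with hc
  have hpi := Real.pi_pos
  -- bounds on half angles
  have hb1 : |r₁ * s / 2| < Real.pi / 2 := by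
    rw [abs_div]; simp only [abs_two]
    exact div_lt_div_of_pos_right hz1 (by norm_num) |>.trans_le (le_refl _)
  have hb2 : |r₂ * s / 2| < Real.pi / 2 := by
    rw [abs_div]; simp only [abs_two]
    exact div_lt_div_of_pos_right hz2 (by norm_num)
  have hcos2pos : 0 < Real.cos (r₂ * s / 2) := by
    apply Real.cos_pos_of_mem_Ioo
    constructor
    · linarith [abs_lt.mp hb2 |>.1]
    · linarith [abs_lt.mp hb2 |>.2]
  have hcos1pos : 0 < Real.cos (r₁ * s / 2) := by
    apply Real.cos_pos_of_mem_Ioo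
    constructor
    · linarith [abs_lt.mp hb1 |>.1]
    · linarith [abs_lt.mp hb1 |>.2]
  have hch1 : 0 < Real.cosh (r₁ * c / 2) := Real.cosh_pos _
  have hch2 : 0 < Real.cosh (r₂ * c / 2) := Real.cosh_pos _
  have key : Real.cos (r₂ * s / 2) / Real.cosh (r₂ * c / 2)
      < Real.cos (r₁ * s / 2) / Real.cosh (r₁ * c / 2) := by
    by_cases hsz : s = 0
    · -- cos terms are 1, cosh strictly increases since c ≠ 0
      have hcz : c ≠ 0 := by
        intro h
        have := Real.sin_sq_add_cos_sq θ
        rw [← hs, ← hc, hsz, h] at this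
        norm_num at this
      have : Real.cosh (r₁ * c / 2) < Real.cosh (r₂ * c / 2) := by
        rw [Real.cosh_lt_cosh]
        rw [abs_div, abs_div, abs_mul, abs_mul, abs_of_pos h1, abs_of_pos h2]
        have : 0 < |c| := abs_pos.mpr hcz
        apply div_lt_div_of_pos_right _ (by norm_num [abs_two] : (0:ℝ) < |(2:ℝ)|)
        exact mul_lt_mul_of_pos_right h12 this
      rw [hsz]
      simp only [mul_zero, zero_div, Real.cos_zero]
      exact div_lt_div_of_pos_left one_pos hch1 this
    · -- cos strictly decreases, cosh weakly increases
      have hcoslt : Real.cos (r₂ * s / 2) < Real.cos (r₁ * s / 2) := by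
        rw [← Real.cos_abs (r₂ * s / 2), ← Real.cos_abs (r₁ * s / 2)]
        apply Real.cos_lt_cos_of_nonneg_of_le_pi (abs_nonneg _) (le_of_lt (hb2.trans (by linarith)))
        rw [abs_div, abs_div, abs_mul, abs_mul, abs_of_pos h1, abs_of_pos h2]
        have hsabs : 0 < |s| := abs_pos.mpr hsz
        apply div_lt_div_of_pos_right _ (by norm_num [abs_two] : (0:ℝ) < |(2:ℝ)|)
        exact mul_lt_mul_of_pos_right h12 hsabs
      have hchle : Real.cosh (r₁ * c / 2) ≤ Real.cosh (r₂ * c / 2) := by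
        rw [Real.cosh_le_cosh]
        rw [abs_div, abs_div, abs_mul, abs_mul, abs_of_pos h1, abs_of_pos h2]
        apply div_le_div_of_nonneg_right _ (by norm_num [abs_two] : (0:ℝ) ≤ |(2:ℝ)|)
        exact mul_le_mul_of_nonneg_right h12.le (abs_nonneg _)
      calc Real.cos (r₂ * s / 2) / Real.cosh (r₂ * c / 2)
          ≤ Real.cos (r₂ * s / 2) / Real.cosh (r₁ * c / 2) := by
            apply div_le_div_of_nonneg_left hcos2pos.le hch1 hchle
        _ < Real.cos (r₁ * s / 2) / Real.cosh (r₁ * c / 2) :=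
            div_lt_div_of_pos_right hcoslt hch1
  linarith
end

section
/- For every s ∈ (0,1) and every angle θ ∈ ℝ, there exists a unique r > 0 such that re^{iθ} lies in the strip |Im(z)| < π and f(re^{iθ}) = s. In particular, each level set L_s with 0 < s < 1 meets every ray from the origin in exactly one point. -/
theorem stmt_6 (s : ℝ) (hs : s ∈ Set.Ioo (0 : ℝ) 1) (θ : ℝ) :
    ∃! r : ℝ, 0 < r ∧ |((r : ℂ) * Complex.exp (θ * Complex.I)).im| < Real.pi ∧
      f ((r : ℂ) * Complex.exp (θ * Complex.I)) = s := by
  obtain ⟨hs0, hs1⟩ := hs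
  set a := |Real.sin θ| with ha
  set b := |Real.cos θ| with hb
  have ha0 : 0 ≤ a := abs_nonneg _
  set G : ℝ → ℝ := fun r => Real.cos (r * a / 2) / Real.cosh (r * b / 2) with hGdef
  have him : ∀ r : ℝ, ((r : ℂ) * Complex.exp (θ * Complex.I)).im = r * Real.sin θ := by
    intro r
    simp [Complex.exp_mul_I, Complex.mul_im, Complex.mul_re, Complex.sin_ofReal_re, Complex.cos_ofReal_re]
  have hre : ∀ r : ℝ, ((r : ℂ) * Complex.exp (θ * Complex.I)).re = r * Real.cos θ := by
    intro r
    simp [Complex.exp_mul_I, Complex.mul_im, Complex.mul_re, Complex.sin_ofReal_re, Complex.cos_ofReal_re]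
  have habs : ∀ r : ℝ, 0 ≤ r → |((r : ℂ) * Complex.exp (θ * Complex.I)).im| = r * a := by
    intro r hr
    rw [him, abs_mul, abs_of_nonneg hr]
  have hG : ∀ r : ℝ, 0 ≤ r → f ((r : ℂ) * Complex.exp (θ * Complex.I)) = 1 - G r := by
    intro r hr
    rw [f, him, hre, hGdef]
    have h1 : Real.cos (r * Real.sin θ / 2) = Real.cos (r * a / 2) := by
      rw [← Real.cos_abs (r * Real.sin θ / 2), abs_div, abs_mul, abs_of_nonneg hr,
        abs_of_nonneg (by norm_num : (0:ℝ) ≤ 2)]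
    have h2 : Real.cosh (r * Real.cos θ / 2) = Real.cosh (r * b / 2) := by
      rw [← Real.cosh_abs (r * Real.cos θ / 2), abs_div, abs_mul, abs_of_nonneg hr,
        abs_of_nonneg (by norm_num : (0:ℝ) ≤ 2)]
    rw [h1, h2]
  have hcoshpos : ∀ t : ℝ, 0 < Real.cosh t := fun t => Real.cosh_pos t
  -- strict antitonicity
  have hmono : ∀ x y : ℝ, 0 ≤ x → x < y → y * a ≤ Real.pi → G y < G x := by
    intro x y hx hxy hya
    rcases eq_or_lt_of_le ha0 with h0 | h0
    · -- a = 0, so b = 1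
      have hb1 : b = 1 := by
        have h := Real.sin_sq_add_cos_sq θ
        have : Real.sin θ = 0 := abs_eq_zero.mp h0.symm
        have hb2 : b ^ 2 = 1 := by rw [hb, sq_abs]; nlinarith
        nlinarith [abs_nonneg (Real.cos θ)]
      simp only [hGdef, ← h0, hb1, mul_zero, zero_div, Real.cos_zero, mul_one]
      rw [div_lt_div_iff₀ (hcoshpos _) (hcoshpos _), one_mul, one_mul,
        Real.cosh_lt_cosh, abs_of_nonneg (by linarith : (0:ℝ) ≤ x / 2),
        abs_of_nonneg (by linarith : (0:ℝ) ≤ y / 2)]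
      linarith
    · have hxa : x * a / 2 < y * a / 2 := by
        have := mul_lt_mul_of_pos_right hxy h0; linarith
      have hya2 : y * a / 2 ≤ Real.pi / 2 := by linarith
      have h1 : Real.cos (y * a / 2) < Real.cos (x * a / 2) :=
        Real.cos_lt_cos_of_nonneg_of_le_pi (by positivity)
          (by linarith [Real.pi_pos]) hxa
      have h3 : 0 < Real.cos (x * a / 2) :=
        Real.cos_pos_of_mem_Ioo ⟨by nlinarith [Real.pi_pos], by linarith⟩
      have h4 : 0 ≤ Real.cos (y * a / 2) :=
        Real.cos_nonneg_of_mem_Icc ⟨by nlinarith [Real.pi_pos], by linarith⟩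
      have h2 : Real.cosh (x * b / 2) ≤ Real.cosh (y * b / 2) := by
        rw [Real.cosh_le_cosh]
        have hb0 : 0 ≤ b := abs_nonneg _
        rw [abs_of_nonneg (div_nonneg (mul_nonneg hx hb0) (by norm_num)),
          abs_of_nonneg (div_nonneg (mul_nonneg (by linarith) hb0) (by norm_num))]
        nlinarith
      simp only [hGdef]
      rw [div_lt_div_iff₀ (hcoshpos _) (hcoshpos _)]
      nlinarith [hcoshpos (x * b / 2), hcoshpos (y * b / 2)]
  have hcont : Continuous G := by
    have c1 : Continuous fun r : ℝ => Real.cos (r * a / 2) :=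
      Real.continuous_cos.comp ((continuous_id.mul continuous_const).div_const 2)
    have c2 : Continuous fun r : ℝ => Real.cosh (r * b / 2) :=
      Real.continuous_cosh.comp ((continuous_id.mul continuous_const).div_const 2)
    exact c1.div c2 fun x => (hcoshpos _).ne'
  have hG0 : G 0 = 1 := by simp [hGdef]
  -- find M with G M < 1 - s and M * a ≤ π
  obtain ⟨M, hM0, hMa, hGM⟩ : ∃ M : ℝ, 0 < M ∧ M * a ≤ Real.pi ∧ G M < 1 - s := by
    rcases eq_or_lt_of_le ha0 with h0 | h0
    · have hb1 : b = 1 := by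
        have h := Real.sin_sq_add_cos_sq θ
        have : Real.sin θ = 0 := abs_eq_zero.mp h0.symm
        have hb2 : b ^ 2 = 1 := by rw [hb, sq_abs]; nlinarith
        nlinarith [abs_nonneg (Real.cos θ)]
      have h1s : 0 < 1 - s := by linarith
      refine ⟨4 / (1 - s), by positivity, ?_, ?_⟩
      · rw [← h0, mul_zero]; exact Real.pi_pos.le
      · set M := 4 / (1 - s) with hM
        have he : M / 2 + 1 ≤ Real.exp (M / 2) := Real.add_one_le_exp _
        have h2 : Real.exp (M / 2) / 2 ≤ Real.cosh (M / 2) := by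
          rw [Real.cosh_eq]
          have := (Real.exp_pos (-(M / 2))).le
          linarith
        have hc : 1 / (1 - s) < Real.cosh (M / 2) := by
          have hM4 : M / 4 = 1 / (1 - s) := by rw [hM]; ring
          linarith
        have ht : (1 - s) * (1 / (1 - s)) = 1 := by field_simp
        simp only [hGdef, ← h0, hb1, mul_zero, zero_div, Real.cos_zero, mul_one]
        rw [div_lt_iff₀ (hcoshpos _)]
        nlinarith [hc, h1s, ht]
    · have hane : a ≠ 0 := ne_of_gt h0
      refine ⟨Real.pi / a, div_pos Real.pi_pos h0,
        le_of_eq (div_mul_cancel₀ _ hane), ?_⟩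
      have hh : Real.pi / a * a / 2 = Real.pi / 2 := by
        rw [div_mul_cancel₀ _ hane]
      simp only [hGdef, hh, Real.cos_pi_div_two, zero_div]
      linarith
  -- existence via IVT
  have hsub := intermediate_value_Icc' hM0.le hcont.continuousOn
  have hmem : (1 - s) ∈ Set.Icc (G M) (G 0) := ⟨hGM.le, by rw [hG0]; linarith⟩
  obtain ⟨r, hrIcc, hGr⟩ := hsub hmem
  have hr0 : 0 < r := by
    rcases eq_or_lt_of_le hrIcc.1 with h | h
    · exfalso; rw [← h, hG0] at hGr; linarith
    · exact h
  have hrM : r < M := by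
    rcases eq_or_lt_of_le hrIcc.2 with h | h
    · exfalso; rw [h] at hGr; linarith
    · exact h
  have hrpi : r * a < Real.pi := by
    rcases eq_or_lt_of_le ha0 with h0 | h0
    · rw [← h0, mul_zero]; exact Real.pi_pos
    · exact lt_of_lt_of_le (mul_lt_mul_of_pos_right hrM h0) hMa
  refine ⟨r, ⟨hr0, ?_, ?_⟩, ?_⟩
  · rw [habs r hr0.le]; exact hrpi
  · rw [hG r hr0.le, hGr]; ring
  · rintro r' ⟨hr'0, hr'pi, hr'f⟩
    rw [habs r' hr'0.le] at hr'pi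
    rw [hG r' hr'0.le] at hr'f
    have hGr' : G r' = 1 - s := by linarith
    by_contra hne
    rcases lt_or_gt_of_ne hne with h | h
    · have := hmono r' r hr'0.le h (by linarith)
      rw [hGr, hGr'] at this; exact lt_irrefl _ this
    · have := hmono r r' hr0.le h hr'pi.le
      rw [hGr, hGr'] at this; exact lt_irrefl _ this
end

section
/- Let (cₙ), (wₙ), (vₙ) be sequences in the strip |Im(z)| < π satisfying the packing identity cos(Im(wₙ)/2)/cosh(Re(wₙ)/2) = cos(Im(vₙ)/2)/cosh(Re(vₙ)/2), with vₙ = wₙ − cₙ, Re(cₙ) → +∞ and Re(wₙ) → −∞, and with Im(wₙ) ≥ 0 for all n. Then Im(wₙ) → π. -/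
open Filter

theorem stmt_15 (c w v : ℕ → ℂ)
    (hstrip_c : ∀ n, |(c n).im| < Real.pi)
    (hstrip_w : ∀ n, |(w n).im| < Real.pi)
    (hstrip_v : ∀ n, |(v n).im| < Real.pi)
    (hpack : ∀ n, Real.cos ((w n).im / 2) / Real.cosh ((w n).re / 2) =
      Real.cos ((v n).im / 2) / Real.cosh ((v n).re / 2))
    (hv : ∀ n, v n = w n - c n)
    (hcre : Tendsto (fun n => (c n).re) atTop atTop)
    (hwre : Tendsto (fun n => (w n).re) atTop atBot)
    (hwim : ∀ n, 0 ≤ (w n).im) :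
    Tendsto (fun n => (w n).im) atTop (nhds Real.pi) := by
  -- the cosine of half the imaginary part tends to 0
  have hcos0 : Tendsto (fun n => Real.cos ((w n).im / 2)) atTop (nhds 0) := by
    have hbound : ∀ᶠ n in atTop, ‖Real.cos ((w n).im / 2)‖ ≤
        2 * Real.exp (-(c n).re / 2) := by
      filter_upwards [hcre.eventually_ge_atTop 0, hwre.eventually_le_atBot 0] with n hc hw
      have hvre : (v n).re = (w n).re - (c n).re := by rw [hv]; simp
      have hcvpos : 0 < Real.cosh ((v n).re / 2) := Real.cosh_pos _
      have hcwpos : 0 < Real.cosh ((w n).re / 2) := Real.cosh_pos _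
      have heq : Real.cos ((w n).im / 2) =
          Real.cos ((v n).im / 2) * (Real.cosh ((w n).re / 2) / Real.cosh ((v n).re / 2)) := by
        have := hpack n
        field_simp at this ⊢
        linarith [this]
      rw [heq]
      have h1 : ‖Real.cos ((v n).im / 2)‖ ≤ 1 := by
        rw [Real.norm_eq_abs]; exact Real.abs_cos_le_one _
      have hratio : Real.cosh ((w n).re / 2) / Real.cosh ((v n).re / 2) ≤
          2 * Real.exp (-(c n).re / 2) := by
        have hw' : Real.cosh ((w n).re / 2) ≤ Real.exp (-(w n).re / 2) := by
          rw [Real.cosh_eq]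
          have : Real.exp ((w n).re / 2) ≤ Real.exp (-(w n).re / 2) :=
            Real.exp_le_exp.mpr (by linarith)
          have h2 : (0:ℝ) < Real.exp (-(w n).re / 2) := Real.exp_pos _
          rw [show (-(w n).re / 2) = -((w n).re / 2) by ring] at *
          linarith
        have hv' : Real.exp (-(v n).re / 2) / 2 ≤ Real.cosh ((v n).re / 2) := by
          rw [Real.cosh_eq]
          have h2 : (0:ℝ) < Real.exp ((v n).re / 2) := Real.exp_pos _
          rw [show (-(v n).re / 2) = -((v n).re / 2) by ring]
          linarith
        have hvp : (0:ℝ) < Real.exp (-(v n).re / 2) / 2 := by positivity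
        calc Real.cosh ((w n).re / 2) / Real.cosh ((v n).re / 2)
            ≤ Real.exp (-(w n).re / 2) / (Real.exp (-(v n).re / 2) / 2) := by
              apply div_le_div₀ (Real.exp_pos _).le hw' hvp hv'
          _ = 2 * Real.exp (-(c n).re / 2) := by
              rw [hvre, div_div_eq_mul_div, mul_comm, mul_div_assoc, ← Real.exp_sub]
              ring_nf
      have hratio0 : 0 ≤ Real.cosh ((w n).re / 2) / Real.cosh ((v n).re / 2) := by positivity
      calc ‖Real.cos ((v n).im / 2) * (Real.cosh ((w n).re / 2) / Real.cosh ((v n).re / 2))‖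
          = ‖Real.cos ((v n).im / 2)‖ * ‖Real.cosh ((w n).re / 2) / Real.cosh ((v n).re / 2)‖ :=
            norm_mul _ _
        _ ≤ 1 * (Real.cosh ((w n).re / 2) / Real.cosh ((v n).re / 2)) := by
            rw [Real.norm_eq_abs (Real.cosh _ / _), abs_of_nonneg hratio0]
            exact mul_le_mul_of_nonneg_right h1 hratio0 |>.trans_eq rfl |>.trans
              (le_of_eq rfl) |>.trans (le_refl _) |>.trans
              (by exact le_of_eq rfl)
        _ = Real.cosh ((w n).re / 2) / Real.cosh ((v n).re / 2) := one_mul _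
        _ ≤ 2 * Real.exp (-(c n).re / 2) := hratio
    have hg : Tendsto (fun n => 2 * Real.exp (-(c n).re / 2)) atTop (nhds 0) := by
      have : Tendsto (fun n => -(c n).re / 2) atTop atBot := by
        apply Tendsto.atBot_div_const (by norm_num)
        exact tendsto_neg_atBot_iff.mpr hcre
      simpa using (Real.tendsto_exp_atBot.comp this).const_mul 2
    exact squeeze_zero_norm' hbound hg
  -- use arccos to conclude
  have harccos : Tendsto (fun n => Real.arccos (Real.cos ((w n).im / 2))) atTop
      (nhds (Real.pi / 2)) := by
    have := (Real.continuous_arccos.tendsto 0).comp hcos0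
    simpa [Real.arccos_zero, Function.comp_def] using this
  have heq : ∀ n, Real.arccos (Real.cos ((w n).im / 2)) = (w n).im / 2 := by
    intro n
    apply Real.arccos_cos
    · linarith [hwim n]
    · have := hstrip_w n
      rw [abs_lt] at this
      linarith [Real.pi_pos, this.2]
  have : Tendsto (fun n => (w n).im / 2) atTop (nhds (Real.pi / 2)) := by
    simpa [heq] using harccos
  have := this.const_mul 2
  simpa [mul_div_cancel₀] using this
end
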